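/- For the strict-rate-constrained UCB algorithm there exists an absolute constant C > 0 (independent of K, T, v, and the reward distributions) such that the regret satisfies the worst-case bound Reg_T ≤ C·( √(T·K·ln T) + K·ln T ). -/

import Mathlib

open MeasureTheory ProbabilityTheory Finset

namespace FairBandit

variable {Ω : Type} [MeasurableSpace Ω]

/-- Number of pulls of arm `i` among rounds `1, …, t`. -/
def pullCount {K : ℕ} (arm : ℕ → Ω → Fin K) (i : Fin K) (t : ℕ) (ω : Ω) : ℕ :=
  ((Finset.Icc 1 t).filter (fun s => arm s ω = i)).card

/-- Empirical mean of arm `i` at round `t`:  average of the first `n_{t-1}(i)`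
samples `X i 0, X i 1, …` of arm `i` (the sample `X i k` is observed at the
`(k+1)`-st pull of arm `i`). -/
noncomputable def empMean {K : ℕ} (X : Fin K → ℕ → Ω → ℝ) (arm : ℕ → Ω → Fin K)
    (i : Fin K) (t : ℕ) (ω : Ω) : ℝ :=
  (∑ k ∈ Finset.range (pullCount arm i (t - 1) ω), X i k ω) / (pullCount arm i (t - 1) ω)

/-- Upper confidence bound of arm `i` at round `t`. -/
noncomputable def ucb {K : ℕ} (T : ℕ) (X : Fin K → ℕ → Ω → ℝ) (arm : ℕ → Ω → Fin K)
    (i : Fin K) (t : ℕ) (ω : Ω) : ℝ :=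
  empMean X arm i t ω + 2 * Real.sqrt (Real.log T / (pullCount arm i (t - 1) ω))

/-- The stochastic bandit environment: for every arm `i` the samples
`X i 0, X i 1, …` take values in `[0,1]`, the whole family is (jointly)
independent, the samples of each arm are identically distributed, and the
mean of every sample of arm `i` is `μ i`. -/
def BanditEnv {K : ℕ} (P : Measure Ω) (X : Fin K → ℕ → Ω → ℝ) (μ : Fin K → ℝ) : Prop :=
  (∀ i k, Measurable (X i k)) ∧
  (∀ i k ω, X i k ω ∈ Set.Icc (0 : ℝ) 1) ∧
  iIndepFun (m := fun _ : Fin K × ℕ => (inferInstance : MeasurableSpace ℝ))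
    (fun p : Fin K × ℕ => X p.1 p.2) P ∧
  (∀ i k, Measure.map (X i k) P = Measure.map (X i 0) P) ∧
  (∀ i k, ∫ ω, X i k ω ∂P = μ i)

/-- Block offset of a round `t > K`:  writing `t - K = (j-1)·L + s` with
`s ∈ {1, …, L}`, the offset is `s`. -/
def offset (K L t : ℕ) : ℕ := (t - K - 1) % L + 1

/-- The non-prescheduled rounds among `{K+1, …, T}`. -/
def freeRounds (K L T : ℕ) (S : Finset ℕ) : Finset ℕ :=
  (Finset.Icc (K + 1) T).filter (fun t => offset K L t ∉ S)

/-- The strict-rate-constrained UCB algorithm: the pulled arm `arm t` is the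
`t`-th arm for `t = 1, …, K`; afterwards, prescheduled rounds (block offset in
`S`) pull the prescheduled arm `g s`, and all other rounds pull the arm with
largest UCB index (ties broken by smallest index). -/
def StrictUCB {K : ℕ} (T L : ℕ) (S : Finset ℕ) (g : ℕ → Fin K)
    (X : Fin K → ℕ → Ω → ℝ) (arm : ℕ → Ω → Fin K) : Prop :=
  (∀ t, Measurable (arm t)) ∧
  (∀ t ω, 1 ≤ t → t ≤ K → ((arm t ω : ℕ) = t - 1)) ∧
  (∀ t ω, K < t → offset K L t ∈ S → arm t ω = g (offset K L t)) ∧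
  (∀ t ω, K < t → offset K L t ∉ S →
    (∀ j, ucb T X arm j t ω ≤ ucb T X arm (arm t ω) t ω) ∧
    (∀ j, ucb T X arm j t ω = ucb T X arm (arm t ω) t ω → arm t ω ≤ j))

end FairBandit

/-! On the event that every empirical mean of at most `T` samples lies within `2 √(ln T / n)`
of its mean, the UCB index of the optimal arm is at least `μ*` while that of any arm `i` is at
most `μ i + 4 √(ln T / n_i)`; so a free round pulls `i` only while `Δ_i² n_i ≤ 16 ln T`, and arm
`i` gets at most `16 ln T / Δ_i²` free pulls. Cauchy–Schwarz over the arms turns this into a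
regret of at most `4 √(T K ln T)`. By Hoeffding's inequality and a union bound the event fails
with probability at most `2K / T`, and the regret never exceeds `T`. -/

open FairBandit MeasureTheory ProbabilityTheory Finset Real

section

variable {Ω : Type*} [MeasurableSpace Ω] {P : Measure Ω} [IsProbabilityMeasure P]

theorem measureReal_abs_sum_range_div_sub_ge_le {Y : ℕ → Ω → ℝ} {m : ℝ}
    (hmeas : ∀ k, Measurable (Y k)) (hbound : ∀ k ω, Y k ω ∈ Set.Icc (0 : ℝ) 1)
    (hmean : ∀ k, P[Y k] = m) (hindep : iIndepFun Y P) {n : ℕ} (hn : 0 < n) {ε : ℝ}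
    (hε : 0 ≤ ε) :
    P.real {ω | ε ≤ |(∑ k ∈ range n, Y k ω) / n - m|} ≤ 2 * exp (-2 * n * ε ^ 2) := by
  have hn' : (0 : ℝ) < n := by exact_mod_cast hn
  have hsubG : ∀ k, HasSubgaussianMGF (fun ω ↦ Y k ω - m) (1 / 4) P := fun k ↦ by
    have h := hasSubgaussianMGF_of_mem_Icc (μ := P) (hmeas k).aemeasurable (ae_of_all _ (hbound k))
    rw [hmean k] at h
    convert h using 1
    norm_num
  have hindep_sub : iIndepFun (fun k ω ↦ Y k ω - m) P :=
    hindep.comp (fun _ x ↦ x - m) fun _ ↦ measurable_id.sub_const _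
  have hindep_neg : iIndepFun (fun k ω ↦ -(Y k ω - m)) P :=
    hindep.comp (fun _ x ↦ -(x - m)) fun _ ↦ (measurable_id.sub_const _).neg
  have hupper := HasSubgaussianMGF.measure_sum_range_ge_le_of_iIndepFun hindep_sub
    (fun k _ ↦ hsubG k) (mul_nonneg hn'.le hε) (n := n)
  have hlower := HasSubgaussianMGF.measure_sum_range_ge_le_of_iIndepFun hindep_neg
    (fun k _ ↦ (hsubG k).neg) (mul_nonneg hn'.le hε) (n := n)
  have hexp : exp (-(n * ε) ^ 2 / (2 * n * ((1 / 4 : NNReal) : ℝ))) = exp (-2 * n * ε ^ 2) := by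
    congr 1
    push_cast
    field_simp
    ring
  have hsub : {ω | ε ≤ |(∑ k ∈ range n, Y k ω) / n - m|} ⊆
      {ω | n * ε ≤ ∑ k ∈ range n, (Y k ω - m)} ∪ {ω | n * ε ≤ ∑ k ∈ range n, -(Y k ω - m)} := by
    intro ω hω
    have hdev : (∑ k ∈ range n, Y k ω) / n - m = (∑ k ∈ range n, (Y k ω - m)) / n := by
      rw [sum_sub_distrib, sum_const, card_range, nsmul_eq_mul]
      field_simp
    rw [Set.mem_ofPred_eq, hdev, abs_div, Nat.abs_cast, le_div_iff₀ hn', mul_comm] at hω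
    simp only [Set.mem_union, Set.mem_ofPred_eq, sum_neg_distrib]
    rcases le_abs'.1 hω with h | h
    · exact Or.inr (by linarith)
    · exact Or.inl h
  calc P.real {ω | ε ≤ |(∑ k ∈ range n, Y k ω) / n - m|}
      ≤ P.real {ω | n * ε ≤ ∑ k ∈ range n, (Y k ω - m)}
        + P.real {ω | n * ε ≤ ∑ k ∈ range n, -(Y k ω - m)} :=
        (measureReal_mono hsub).trans (measureReal_union_le _ _)
    _ ≤ 2 * exp (-2 * n * ε ^ 2) := by rw [hexp] at hupper hlower; linarith

theorem integral_le_add_mul_measureReal_compl {f : Ω → ℝ} {G : Set Ω} (hG : MeasurableSet G)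
    {B M : ℝ} (hB : 0 ≤ B) (hf : ∀ ω, 0 ≤ f ω) (hfG : ∀ ω ∈ G, f ω ≤ B)
    (hfGc : ∀ ω ∉ G, f ω ≤ M) :
    ∫ ω, f ω ∂P ≤ B + M * P.real Gᶜ := by
  have hle : ∀ ω, f ω ≤ B + Gᶜ.indicator (fun _ ↦ M) ω := fun ω ↦ by
    by_cases hω : ω ∈ G
    · simpa [hω] using hfG ω hω
    · simpa [hω] using (hfGc ω hω).trans (le_add_of_nonneg_left hB)
  calc ∫ ω, f ω ∂P ≤ ∫ ω, (B + Gᶜ.indicator (fun _ ↦ M) ω) ∂P :=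
        integral_mono_of_nonneg (ae_of_all _ hf)
          ((integrable_const B).add ((integrable_const M).indicator hG.compl)) (ae_of_all _ hle)
    _ = B + M * P.real Gᶜ := by
        rw [integral_add (integrable_const B) ((integrable_const M).indicator hG.compl),
          integral_indicator_const _ hG.compl]
        simp [mul_comm]

end

theorem Finset.exists_card_le_of_injOn {α : Type*} {s : Finset α} {f : α → ℕ}
    (hs : s.Nonempty) (hf : Set.InjOn f s) (hpos : ∀ a ∈ s, 1 ≤ f a) : ∃ a ∈ s, #s ≤ f a := by
  by_contra! hlt
  have hcard := card_le_card_of_injOn f (t := Ico 1 #s)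
    (fun a ha ↦ mem_Ico.2 ⟨hpos a ha, hlt a ha⟩) hf
  have := hs.card_pos
  simp only [Nat.card_Ico] at hcard
  omega

theorem Finset.sum_mul_le_sqrt_of_mul_sq_le {ι : Type*} (s : Finset ι) {c Δ : ι → ℝ} {N A : ℝ}
    (hc : ∀ j, 0 ≤ c j) (hΔ : ∀ j, 0 ≤ Δ j) (hN : ∑ j ∈ s, c j ≤ N)
    (hA : ∀ j ∈ s, c j * Δ j ^ 2 ≤ A) :
    ∑ j ∈ s, c j * Δ j ≤ √(N * (#s * A)) := by
  have hsplit : ∀ j, c j * Δ j = √(c j) * √(c j * Δ j ^ 2) := fun j ↦ by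
    rw [← Real.sqrt_mul (hc j), ← mul_assoc, ← pow_two, ← mul_pow,
      Real.sqrt_sq (mul_nonneg (hc j) (hΔ j))]
  calc ∑ j ∈ s, c j * Δ j = ∑ j ∈ s, √(c j) * √(c j * Δ j ^ 2) := sum_congr rfl fun j _ ↦ hsplit j
    _ ≤ √(∑ j ∈ s, c j) * √(∑ j ∈ s, c j * Δ j ^ 2) :=
        Real.sum_sqrt_mul_sqrt_le s hc fun j ↦ mul_nonneg (hc j) (sq_nonneg _)
    _ ≤ √N * √(#s * A) := by
        gcongr
        simpa using sum_le_sum hA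
    _ = √(N * (#s * A)) :=
        (Real.sqrt_mul ((sum_nonneg fun j _ ↦ hc j).trans hN) _).symm

namespace FairBandit

variable {Ω : Type} {K : ℕ} {X : Fin K → ℕ → Ω → ℝ} {μ : Fin K → ℝ} {arm : ℕ → Ω → Fin K}
  {T L : ℕ} {S : Finset ℕ} {g : ℕ → Fin K} {ω : Ω}

theorem pullCount_le (i : Fin K) (t : ℕ) (ω : Ω) : pullCount arm i t ω ≤ t :=
  (card_filter_le _ _).trans (by simp)

theorem pullCount_sub_one_lt {i : Fin K} {t t' : ℕ} (ht : 1 ≤ t) (htt' : t < t')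
    (hi : arm t ω = i) : pullCount arm i (t - 1) ω < pullCount arm i (t' - 1) ω := by
  refine card_lt_card ((ssubset_iff_of_subset (filter_subset_filter _
    (Icc_subset_Icc_right (by omega)))).2 ⟨t, mem_filter.2 ⟨mem_Icc.2 ⟨ht, by omega⟩, hi⟩, ?_⟩)
  simp only [mem_filter, mem_Icc]
  omega

theorem card_freeRounds_le : #(freeRounds K L T S) ≤ T :=
  (card_filter_le _ _).trans (by simp)

def goodEvent (X : Fin K → ℕ → Ω → ℝ) (μ : Fin K → ℝ) (T : ℕ) : Set Ω :=
  ⋂ i, ⋂ n ∈ Icc 1 T, {ω | |(∑ k ∈ range n, X i k ω) / n - μ i| ≤ 2 * √(log T / n)}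

variable [MeasurableSpace Ω] {P : Measure Ω}

theorem measurableSet_goodEvent (hX : ∀ i k, Measurable (X i k)) :
    MeasurableSet (goodEvent X μ T) :=
  .iInter fun i ↦ Finset.measurableSet_biInter _ fun _ _ ↦ measurableSet_le
    (((Finset.measurable_sum _ fun k _ ↦ hX i k).div_const _).sub_const _).abs measurable_const

theorem BanditEnv.mean_mem_Icc [IsProbabilityMeasure P] (henv : BanditEnv P X μ) (i : Fin K) :
    μ i ∈ Set.Icc (0 : ℝ) 1 := by
  rw [← henv.2.2.2.2 i 0]
  have hX := henv.2.1 i 0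
  refine ⟨integral_nonneg fun ω ↦ (hX ω).1, ?_⟩
  simpa using integral_mono (Integrable.of_mem_Icc (μ := P) 0 1 (henv.1 i 0).aemeasurable
    (ae_of_all _ hX)) (integrable_const 1) fun ω ↦ (hX ω).2

theorem BanditEnv.measureReal_confidence_violation_le [IsProbabilityMeasure P]
    (henv : BanditEnv P X μ) (i : Fin K) {n : ℕ} (hn : 0 < n) (hT : 0 < T) :
    P.real {ω | 2 * √(log T / n) < |(∑ k ∈ range n, X i k ω) / n - μ i|} ≤ 2 / T ^ 2 := by
  have hT' : (0 : ℝ) < T := by exact_mod_cast hT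
  have hlog : 0 ≤ log T := log_nonneg (by exact_mod_cast hT)
  have hindep : iIndepFun (fun k ↦ X i k) P :=
    henv.2.2.1.precomp (g := fun k ↦ (i, k)) fun _ _ h ↦ (Prod.mk.inj h).2
  have hoeffding := measureReal_abs_sum_range_div_sub_ge_le (henv.1 i) (henv.2.1 i)
    (henv.2.2.2.2 i) hindep hn (ε := 2 * √(log T / n)) (by positivity)
  have hexp : 2 * exp (-2 * n * (2 * √(log T / n)) ^ 2) ≤ 2 / T ^ 2 := by
    have hn' : (0 : ℝ) < n := by exact_mod_cast hn
    rw [mul_pow, Real.sq_sqrt (by positivity), show -2 * n * (2 ^ 2 * (log T / n)) = -8 * log T by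
      field_simp; ring]
    calc 2 * exp (-8 * log T) ≤ 2 * exp (-2 * log T) := by gcongr; linarith
      _ = 2 / T ^ 2 := by
        rw [show -2 * log T = -log (T ^ 2) by rw [log_pow]; push_cast; ring, exp_neg,
          exp_log (by positivity), div_eq_mul_inv]
  exact (measureReal_mono (Set.ofPred_subset_ofPred.2 fun _ ↦ le_of_lt)).trans
    (hoeffding.trans hexp)

theorem BanditEnv.measureReal_goodEvent_compl_le [IsProbabilityMeasure P]
    (henv : BanditEnv P X μ) (hT : 0 < T) :
    P.real (goodEvent X μ T)ᶜ ≤ 2 * K / T := by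
  have hcompl : (goodEvent X μ T)ᶜ = ⋃ i, ⋃ n ∈ Icc 1 T,
      {ω | 2 * √(log T / n) < |(∑ k ∈ range n, X i k ω) / n - μ i|} := by
    simp [goodEvent, Set.compl_iInter, Set.compl_ofPred]
  calc P.real (goodEvent X μ T)ᶜ
      ≤ ∑ i, ∑ n ∈ Icc 1 T,
          P.real {ω | 2 * √(log T / n) < |(∑ k ∈ range n, X i k ω) / n - μ i|} := by
        rw [hcompl]
        exact (measureReal_iUnion_fintype_le _).trans
          (sum_le_sum fun i _ ↦ measureReal_biUnion_finset_le _ _)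
    _ ≤ ∑ _i : Fin K, ∑ _n ∈ Icc 1 T, (2 / T ^ 2 : ℝ) :=
        sum_le_sum fun i _ ↦ sum_le_sum fun _ hn ↦
          henv.measureReal_confidence_violation_le i (mem_Icc.1 hn).1 hT
    _ = 2 * K / T := by
        simp only [sum_const, card_univ, Fintype.card_fin, Nat.card_Icc, nsmul_eq_mul]
        field_simp
        push_cast
        ring

theorem StrictUCB.one_le_pullCount (halg : StrictUCB T L S g X arm) (i : Fin K) {t : ℕ}
    (ht : K ≤ t) (ω : Ω) : 1 ≤ pullCount arm i t ω := by
  have hinit := halg.2.1 (i + 1) ω (by omega) (by omega)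
  exact card_pos.2 ⟨i + 1, mem_filter.2 ⟨mem_Icc.2 ⟨by omega, by omega⟩, Fin.ext (by omega)⟩⟩

theorem StrictUCB.abs_empMean_sub_le (halg : StrictUCB T L S g X arm)
    (hω : ω ∈ goodEvent X μ T) {t : ℕ} (htK : K < t) (htT : t ≤ T + 1) (i : Fin K) :
    |empMean X arm i t ω - μ i| ≤ 2 * √(log T / pullCount arm i (t - 1) ω) := by
  exact Set.mem_iInter₂.1 (Set.mem_iInter.1 hω i) (pullCount arm i (t - 1) ω)
    (mem_Icc.2 ⟨halg.one_le_pullCount i (by omega) ω, (pullCount_le i _ ω).trans (by omega)⟩)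

theorem StrictUCB.gap_le_of_mem_goodEvent (halg : StrictUCB T L S g X arm)
    (hω : ω ∈ goodEvent X μ T) {t : ℕ} (ht : t ∈ freeRounds K L T S) (istar : Fin K) :
    μ istar - μ (arm t ω) ≤ 4 * √(log T / pullCount arm (arm t ω) (t - 1) ω) := by
  obtain ⟨htIcc, hfree⟩ := mem_filter.1 ht
  obtain ⟨htK, htT⟩ := mem_Icc.1 htIcc
  have hbest := (halg.2.2.2 t ω (by omega) hfree).1 istar
  have hstar := abs_le.1 (halg.abs_empMean_sub_le hω (t := t) (by omega) (by omega) istar)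
  have hpulled := abs_le.1 (halg.abs_empMean_sub_le hω (t := t) (by omega) (by omega) (arm t ω))
  simp only [ucb] at hbest
  linarith [hstar.1, hpulled.2]

theorem StrictUCB.card_pulls_mul_gap_sq_le (halg : StrictUCB T L S g X arm)
    (hω : ω ∈ goodEvent X μ T) {istar i : Fin K} (hgap : 0 ≤ μ istar - μ i) (hT : 1 ≤ T) :
    #{t ∈ freeRounds K L T S | arm t ω = i} * (μ istar - μ i) ^ 2 ≤ 16 * log T := by
  set pulls := {t ∈ freeRounds K L T S | arm t ω = i}
  have hlog : 0 ≤ log T := log_nonneg (by exact_mod_cast hT)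
  rcases pulls.eq_empty_or_nonempty with hempty | hne
  · simp [hempty, hlog]
  have hK : ∀ t ∈ pulls, K < t := fun t ht ↦
    (mem_Icc.1 (mem_filter.1 (mem_filter.1 ht).1).1).1
  obtain ⟨t, ht, hcard⟩ := exists_card_le_of_injOn (f := fun t ↦ pullCount arm i (t - 1) ω) hne
    (fun a ha b hb hab ↦ by
      by_contra hne
      rcases Nat.lt_or_gt_of_ne hne with h | h
      · exact (pullCount_sub_one_lt (by have := hK a ha; omega) h (mem_filter.1 ha).2).ne hab
      · exact (pullCount_sub_one_lt (by have := hK b hb; omega) h (mem_filter.1 hb).2).ne' hab)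
    fun t ht ↦ halg.one_le_pullCount i (by have := hK t ht; omega) ω
  obtain ⟨htfree, rfl⟩ := mem_filter.1 ht
  set n := pullCount arm (arm t ω) (t - 1) ω
  have hn : (0 : ℝ) < n := by exact_mod_cast halg.one_le_pullCount _ (by have := hK t ht; omega) ω
  have hsq : (μ istar - μ (arm t ω)) ^ 2 ≤ 16 * (log T / n) := by
    have h := pow_le_pow_left₀ hgap (halg.gap_le_of_mem_goodEvent hω htfree istar) 2
    rwa [mul_pow, Real.sq_sqrt (by positivity), show (4 : ℝ) ^ 2 = 16 by norm_num] at h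
  calc (pulls.card : ℝ) * (μ istar - μ (arm t ω)) ^ 2 ≤ n * (16 * (log T / n)) := by
        gcongr
    _ = 16 * log T := by field_simp

theorem StrictUCB.regret_le_of_mem_goodEvent (halg : StrictUCB T L S g X arm)
    (hω : ω ∈ goodEvent X μ T) {istar : Fin K} (hopt : ∀ j, μ j ≤ μ istar) (hT : 1 ≤ T) :
    ∑ t ∈ freeRounds K L T S, (μ istar - μ (arm t ω)) ≤ 4 * √(T * K * log T) := by
  set pulls : Fin K → ℝ := fun j ↦ #{t ∈ freeRounds K L T S | arm t ω = j}
  have hregroup : ∑ t ∈ freeRounds K L T S, (μ istar - μ (arm t ω)) =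
      ∑ j, pulls j * (μ istar - μ j) := by
    rw [← sum_fiberwise (freeRounds K L T S) (fun t ↦ arm t ω)]
    refine sum_congr rfl fun j _ ↦ ?_
    rw [sum_congr rfl fun t ht ↦ by rw [(mem_filter.1 ht).2], sum_const, nsmul_eq_mul]
  have hcount : ∑ j, pulls j ≤ T := by
    simp only [pulls]
    rw [← Nat.cast_sum, ← card_eq_sum_card_fiberwise fun t _ ↦ mem_univ (arm t ω)]
    exact_mod_cast card_freeRounds_le
  rw [hregroup]
  calc ∑ j, pulls j * (μ istar - μ j) ≤ √(T * (#(univ : Finset (Fin K)) * (16 * log T))) :=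
        sum_mul_le_sqrt_of_mul_sq_le univ (fun j ↦ by positivity) (fun j ↦ sub_nonneg.2 (hopt j))
          hcount fun j _ ↦ halg.card_pulls_mul_gap_sq_le hω (sub_nonneg.2 (hopt j)) hT
    _ = 4 * √(T * K * log T) := by
        rw [card_univ, Fintype.card_fin, show (T : ℝ) * (K * (16 * log T)) =
          4 ^ 2 * (T * K * log T) by ring, Real.sqrt_mul' _ (by positivity),
          Real.sqrt_sq (by norm_num)]

end FairBandit

/-- For the strict-rate-constrained UCB algorithm there is
an absolute constant `C > 0` such that the regret satisfies the worst-case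
bound `Reg_T ≤ C·(√(T·K·ln T) + K·ln T)`. -/
theorem strict_ucb_worst_case_regret_bound :
    ∃ C : ℝ, 0 < C ∧
      ∀ (Ω : Type) (_ : MeasurableSpace Ω) (P : Measure Ω), IsProbabilityMeasure P →
      ∀ (K T L : ℕ) (S : Finset ℕ) (g : ℕ → Fin K) (X : Fin K → ℕ → Ω → ℝ)
        (μ : Fin K → ℝ) (istar : Fin K) (arm : ℕ → Ω → Fin K),
        2 ≤ K → max K 2 ≤ T → K ≤ L →
        S ⊆ Finset.Icc 1 L → S.card = K → Set.BijOn g ↑S (Set.univ : Set (Fin K)) →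
        BanditEnv P X μ → StrictUCB T L S g X arm →
        (∀ j, μ j ≤ μ istar) →
        (∫ ω, (∑ t ∈ freeRounds K L T S, (μ istar - μ (arm t ω))) ∂P) ≤
          C * (Real.sqrt ((T : ℝ) * K * Real.log T) + (K : ℝ) * Real.log T) := by
  refine ⟨4, by norm_num, ?_⟩
  intro Ω _ P _ K T L S g X μ istar arm _ hT _ _ _ _ henv halg hopt
  have hT2 : 2 ≤ T := le_of_max_le_right hT
  have hlog : 1 / 2 ≤ log T :=
    (Real.log_two_gt_d9.le.trans' (by norm_num)).trans (log_le_log two_pos (by exact_mod_cast hT2))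
  have hgap : ∀ j, 0 ≤ μ istar - μ j ∧ μ istar - μ j ≤ 1 := fun j ↦
    ⟨sub_nonneg.2 (hopt j), by linarith [(henv.mean_mem_Icc istar).2, (henv.mean_mem_Icc j).1]⟩
  have hbad : (T : ℝ) * P.real (goodEvent X μ T)ᶜ ≤ 2 * K := by
    calc (T : ℝ) * P.real (goodEvent X μ T)ᶜ ≤ T * (2 * K / T) := by
          gcongr; exact henv.measureReal_goodEvent_compl_le (by omega)
      _ = 2 * K := by field_simp
  calc ∫ ω, ∑ t ∈ freeRounds K L T S, (μ istar - μ (arm t ω)) ∂P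
      ≤ 4 * √(T * K * log T) + T * P.real (goodEvent X μ T)ᶜ :=
        integral_le_add_mul_measureReal_compl (measurableSet_goodEvent henv.1) (by positivity)
          (fun ω ↦ sum_nonneg fun t _ ↦ (hgap _).1)
          (fun ω hω ↦ halg.regret_le_of_mem_goodEvent hω hopt (by omega))
          fun ω _ ↦ (sum_le_sum fun t _ ↦ (hgap _).2).trans
            (by simpa using (Nat.cast_le (α := ℝ)).2 card_freeRounds_le)
    _ ≤ 4 * (√(T * K * log T) + K * log T) := by nlinarith
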